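/- arXiv:1709.06156 — 2 statements merged into one kernel-verified Lean document; each statement's English description precedes it below -/
import Mathlib

section
/- Let $(\widetilde{m}_t)_{t \ge T_0}$ be a sequence of nonnegative reals with $\widetilde{m}_t \to 0$, and define $m_{t+1} = \max(m_t, f(t, m_t))$ where $f(t, x) = (1 - c_5 r_2(t) + c_9 r_1(t)) x + c_{10} r_1(t)$ with $r_1(t) = c_1/(t+1)^{\delta_1}$, $r_2(t) = c_2/(t+1)^{\delta_2}$, $c_1, c_2, c_5, c_9, c_{10} > 0$ and $0 < \delta_2 < \delta_1 < 1$, with $m_{T_0} = \widetilde{m}_{T_0} \ge 0$, and suppose $1 - c_5 r_2(t) + c_9 r_1(t) \ge 0$ for all $t \ge T_0$. Then $\sup_{t \ge T_0} m_t < \infty$. -/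
/-! Since `δ₂ < δ₁`, the term `c₅ r₂(t)` eventually dominates both `c₉ r₁(t)` and
`(c₉ + c₁₀) r₁(t)`. From then on the affine map `x ↦ a_t x + b_t` of the recursion satisfies
`a_t ≤ 1` and `a_t + b_t ≤ 1`, hence maps `(-∞, B]` into itself for every `B ≥ 1`; so `m`, which
is nondecreasing, never exceeds `max 1 (m T)` for a suitable time `T`. -/

open Filter

lemma eventually_div_rpow_le_div_rpow {a b δ₁ δ₂ : ℝ} (hb : 0 < b) (hδ : δ₂ < δ₁) :
    ∀ᶠ x : ℝ in atTop, a / x ^ δ₁ ≤ b / x ^ δ₂ := by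
  have hgrow : Tendsto (fun x : ℝ => x ^ (δ₁ - δ₂)) atTop atTop :=
    tendsto_rpow_atTop (sub_pos.mpr hδ)
  filter_upwards [hgrow.eventually_ge_atTop (a / b), eventually_gt_atTop 0] with x hx hx0
  have h₁ : 0 < x ^ δ₁ := Real.rpow_pos_of_pos hx0 δ₁
  have h₂ : 0 < x ^ δ₂ := Real.rpow_pos_of_pos hx0 δ₂
  rw [Real.rpow_sub hx0, div_le_div_iff₀ hb h₂] at hx
  rw [div_le_div_iff₀ h₁ h₂]
  linarith

lemma affine_le_of_add_le_one {a b B : ℝ} (ha : a ≤ 1) (hab : a + b ≤ 1) (hB : 1 ≤ B) :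
    a * B + b ≤ B := by
  nlinarith

lemma exists_bound_of_eq_max_affine {T₀ : ℕ} {a b m : ℕ → ℝ} (ha : ∀ t, T₀ ≤ t → 0 ≤ a t)
    (hrec : ∀ t, T₀ ≤ t → m (t + 1) = max (m t) (a t * m t + b t))
    (hev : ∀ᶠ t in atTop, a t ≤ 1 ∧ a t + b t ≤ 1) :
    ∃ B : ℝ, ∀ t, T₀ ≤ t → m t ≤ B := by
  obtain ⟨T₁, hT₁⟩ := eventually_atTop.mp hev
  set T := max T₀ T₁
  have hmono : MonotoneOn m (Set.Ici T₀) :=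
    monotoneOn_nat_Ici_of_le_succ fun t ht => (hrec t ht).symm ▸ le_max_left _ _
  have hinv : ∀ t, T ≤ t → m t ≤ max 1 (m T) := by
    intro t ht
    induction t, ht using Nat.le_induction with
    | base => exact le_max_right _ _
    | succ t ht ih =>
      have hT₀t : T₀ ≤ t := (le_max_left _ _).trans ht
      obtain ⟨ha₁, hab⟩ := hT₁ t ((le_max_right _ _).trans ht)
      calc m (t + 1) = max (m t) (a t * m t + b t) := hrec t hT₀t
        _ ≤ max (m t) (a t * max 1 (m T) + b t) := by gcongr; exact ha t hT₀t
        _ ≤ max 1 (m T) := max_le ih (affine_le_of_add_le_one ha₁ hab (le_max_left _ _))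
  refine ⟨max 1 (m T), fun t ht => ?_⟩
  rcases le_total t T with htT | hTt
  · exact (hmono ht (le_max_left T₀ T₁) htT).trans (le_max_right _ _)
  · exact hinv t hTt

theorem stmt_16_general (c1 c2 c5 c9 c10 δ1 δ2 : ℝ)
    (hc2 : 0 < c2) (hc5 : 0 < c5)
    (hδ21 : δ2 < δ1)
    (T0 : ℕ) (m : ℕ → ℝ)
    (hcoef : ∀ t : ℕ, T0 ≤ t →
      0 ≤ 1 - c5 * (c2 / ((t : ℝ) + 1) ^ δ2) + c9 * (c1 / ((t : ℝ) + 1) ^ δ1))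
    (hrec : ∀ t : ℕ, T0 ≤ t → m (t + 1) =
      max (m t)
        ((1 - c5 * (c2 / ((t : ℝ) + 1) ^ δ2) + c9 * (c1 / ((t : ℝ) + 1) ^ δ1)) * m t
          + c10 * (c1 / ((t : ℝ) + 1) ^ δ1))) :
    ∃ B : ℝ, ∀ t : ℕ, T0 ≤ t → m t ≤ B := by
  refine exists_bound_of_eq_max_affine hcoef hrec ?_
  have hshift : Tendsto (fun t : ℕ => (t : ℝ) + 1) atTop atTop :=
    tendsto_atTop_add_const_right _ 1 tendsto_natCast_atTop_atTop
  have hc52 : 0 < c5 * c2 := mul_pos hc5 hc2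
  filter_upwards [hshift.eventually (eventually_div_rpow_le_div_rpow (a := c9 * c1) hc52 hδ21),
    hshift.eventually (eventually_div_rpow_le_div_rpow (a := (c9 + c10) * c1) hc52 hδ21)]
    with t h₁ h₂
  simp only [add_mul, add_div, mul_div_assoc] at h₁ h₂
  constructor <;> linarith

theorem stmt_16 (c1 c2 c5 c9 c10 δ1 δ2 : ℝ)
    (hc1 : 0 < c1) (hc2 : 0 < c2) (hc5 : 0 < c5) (hc9 : 0 < c9) (hc10 : 0 < c10)
    (hδ2 : 0 < δ2) (hδ21 : δ2 < δ1) (hδ1 : δ1 < 1)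
    (T0 : ℕ) (mt m : ℕ → ℝ)
    (hmtnn : ∀ t : ℕ, T0 ≤ t → 0 ≤ mt t)
    (hmt0 : Tendsto mt atTop (nhds 0))
    (hinit : m T0 = mt T0)
    (hcoef : ∀ t : ℕ, T0 ≤ t →
      0 ≤ 1 - c5 * (c2 / ((t : ℝ) + 1) ^ δ2) + c9 * (c1 / ((t : ℝ) + 1) ^ δ1))
    (hrec : ∀ t : ℕ, T0 ≤ t → m (t + 1) =
      max (m t)
        ((1 - c5 * (c2 / ((t : ℝ) + 1) ^ δ2) + c9 * (c1 / ((t : ℝ) + 1) ^ δ1)) * m t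
          + c10 * (c1 / ((t : ℝ) + 1) ^ δ1))) :
    ∃ B : ℝ, ∀ t : ℕ, T0 ≤ t → m t ≤ B :=
  stmt_16_general c1 c2 c5 c9 c10 δ1 δ2 hc2 hc5 hδ21 T0 m hcoef hrec
end

section
/- Consider the scalar recursion $v_{t+1} = (1 - c_3 r_1(t)) v_t + \rho(t)$ where $r_1(t) = c_1/(t+1)^{\delta_1}$, $c_1, c_3 > 0$, $0 < \delta_1 < 1$, and $|\rho(t)| \le C/(t+1)^{\delta_1 + \delta_0}$ for some constants $C, \delta_0 > 0$. Then $\lim_{t\to\infty}(t+1)^{\delta_0'} v_t = 0$ for all $0 \le \delta_0' < \delta_0$ and all initial conditions $v_0 \in \mathbb{R}$. -/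
/-!
Fix `β` with `δ0' < β < δ0`. By Bernoulli's inequality `(1 - β / x) x ^ (-β) ≤ (x + 1) ^ (-β)`,
and since `δ1 < 1` the contraction `c / x ^ δ1` eventually exceeds `2 β / x`; together with the
forcing bound `|ρ t| = O((t + 1) ^ (-(δ1 + β)))` this makes `K (t + 1) ^ (-β)` a supersolution of
the recursion for large `K`. Hence `v t = O((t + 1) ^ (-β))`, and `(t + 1) ^ δ0' v t → 0`.
-/

open Filter Asymptotics Real

lemma tendsto_natCast_add_one_atTop : Tendsto (fun t : ℕ => (t : ℝ) + 1) atTop atTop :=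
  tendsto_atTop_add_const_right atTop 1 tendsto_natCast_atTop_atTop

lemma isBigO_natCast_add_one_rpow_rpow {a b : ℝ} (hab : a ≤ b) :
    (fun t : ℕ => ((t : ℝ) + 1) ^ a) =O[atTop] fun t : ℕ => ((t : ℝ) + 1) ^ b := by
  refine IsBigO.of_bound 1 (Eventually.of_forall fun t => ?_)
  rw [one_mul, norm_of_nonneg (by positivity), norm_of_nonneg (by positivity)]
  exact rpow_le_rpow_of_exponent_le (by linarith [t.cast_nonneg (α := ℝ)]) hab

lemma one_sub_mul_le_one_add_rpow_neg {u β : ℝ} (hu : 0 ≤ u) (hβ : 0 ≤ β) :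
    1 - β * u ≤ (1 + u) ^ (-β) :=
  calc 1 - β * u ≤ exp (u * -β) := by linarith [add_one_le_exp (u * -β)]
    _ = exp u ^ (-β) := exp_mul u (-β)
    _ ≤ (1 + u) ^ (-β) :=
      rpow_le_rpow_of_nonpos (by linarith) (by linarith [add_one_le_exp u]) (by linarith)

lemma one_sub_div_mul_rpow_neg_le {x β : ℝ} (hx : 0 < x) (hβ : 0 ≤ β) :
    (1 - β / x) * x ^ (-β) ≤ (x + 1) ^ (-β) :=
  calc (1 - β / x) * x ^ (-β) ≤ (1 + 1 / x) ^ (-β) * x ^ (-β) := by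
        gcongr
        simpa [div_eq_mul_one_div β x] using
          one_sub_mul_le_one_add_rpow_neg (by positivity : 0 ≤ 1 / x) hβ
    _ = (x + 1) ^ (-β) := by
        rw [← mul_rpow (by positivity) hx.le]
        congr 1
        field_simp

lemma abs_one_sub_mul_add_le {a e x β K u r : ℝ} (hx : 0 < x) (hβ : 0 ≤ β) (hK : 0 ≤ K)
    (ha : a ≤ 1) (hβa : 2 * β / x ≤ a) (he : 2 * e ≤ K * a)
    (hu : |u| ≤ K * x ^ (-β)) (hr : |r| ≤ e * x ^ (-β)) :
    |(1 - a) * u + r| ≤ K * (x + 1) ^ (-β) := by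
  have hxβ : 0 < x ^ (-β) := rpow_pos_of_pos hx _
  calc |(1 - a) * u + r| ≤ (1 - a) * |u| + |r| := by
        simpa only [abs_mul, abs_of_nonneg (sub_nonneg.2 ha)] using abs_add_le ((1 - a) * u) r
    _ ≤ (1 - a) * (K * x ^ (-β)) + e * x ^ (-β) := by gcongr
    _ ≤ K * ((1 - β / x) * x ^ (-β)) := by
        have : β / x ≤ a / 2 := by rw [mul_div_assoc] at hβa; linarith
        nlinarith [mul_le_mul_of_nonneg_left this hK]
    _ ≤ K * (x + 1) ^ (-β) := by gcongr; exact one_sub_div_mul_rpow_neg_le hx hβ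

theorem isBigO_rpow_neg_of_recurrence {c δ β : ℝ} (hc : 0 < c) (hδ : 0 < δ) (hδ' : δ < 1)
    (hβ : 0 < β) {v ρ : ℕ → ℝ}
    (hρ : ρ =O[atTop] fun t : ℕ => ((t : ℝ) + 1) ^ (-(δ + β)))
    (hrec : ∀ᶠ t in atTop, v (t + 1) = (1 - c / ((t : ℝ) + 1) ^ δ) * v t + ρ t) :
    v =O[atTop] fun t : ℕ => ((t : ℝ) + 1) ^ (-β) := by
  obtain ⟨C, hC⟩ := hρ.bound
  have hcontr : ∀ᶠ t : ℕ in atTop, c ≤ ((t : ℝ) + 1) ^ δ :=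
    ((tendsto_rpow_atTop hδ).comp tendsto_natCast_add_one_atTop).eventually_ge_atTop c
  have hgain : ∀ᶠ t : ℕ in atTop, 2 * β / c ≤ ((t : ℝ) + 1) ^ (1 - δ) :=
    ((tendsto_rpow_atTop (sub_pos.2 hδ')).comp tendsto_natCast_add_one_atTop).eventually_ge_atTop _
  obtain ⟨T, hT⟩ := eventually_atTop.1 (hC.and (hrec.and (hcontr.and hgain)))
  set K := max (2 * C / c) (|v T| / ((T : ℝ) + 1) ^ (-β))
  have hK : 0 ≤ K := le_max_of_le_right (by positivity)
  have hbound : ∀ t, T ≤ t → |v t| ≤ K * ((t : ℝ) + 1) ^ (-β) := by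
    intro t ht
    induction t, ht using Nat.le_induction with
    | base => exact (div_le_iff₀ (by positivity)).1 (le_max_right _ _)
    | succ t ht ih =>
      obtain ⟨hρt, hrect, hct, hgt⟩ := hT t ht
      set x : ℝ := (t : ℝ) + 1
      have hx : 0 < x := by positivity
      have hxδ : 0 < x ^ δ := rpow_pos_of_pos hx δ
      push_cast
      rw [hrect]
      have hgain' : 2 * β / x ≤ c / x ^ δ := by
        rw [div_le_iff₀ hc, rpow_sub hx, rpow_one, div_mul_eq_mul_div, le_div_iff₀ hxδ] at hgt
        rw [div_le_div_iff₀ hx hxδ]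
        linarith
      have hCK : 2 * (C / x ^ δ) ≤ K * (c / x ^ δ) := by
        have := le_max_left (2 * C / c) (|v T| / ((T : ℝ) + 1) ^ (-β))
        rw [div_le_iff₀ hc] at this
        simp only [mul_div_assoc']
        gcongr
      have hρx : |ρ t| ≤ C / x ^ δ * x ^ (-β) := by
        rwa [Real.norm_eq_abs, norm_of_nonneg (by positivity), neg_add, rpow_add hx,
          rpow_neg hx.le δ, ← mul_assoc, ← div_eq_mul_inv] at hρt
      exact abs_one_sub_mul_add_le hx hβ.le hK ((div_le_one hxδ).2 hct) hgain' hCK ih hρx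
  refine IsBigO.of_bound K (eventually_atTop.2 ⟨T, fun t ht => ?_⟩)
  rw [Real.norm_eq_abs, Real.norm_of_nonneg (by positivity)]
  exact hbound t ht

theorem stmt_18_general (c1 c3 C δ1 δ0 : ℝ)
    (hc1 : 0 < c1) (hc3 : 0 < c3)
    (hδ1 : 0 < δ1) (hδ1' : δ1 < 1)
    (v ρ : ℕ → ℝ)
    (hρ : ∀ t : ℕ, |ρ t| ≤ C / ((t : ℝ) + 1) ^ (δ1 + δ0))
    (hrec : ∀ t : ℕ, v (t + 1) = (1 - c3 * (c1 / ((t : ℝ) + 1) ^ δ1)) * v t + ρ t)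
    (δ0' : ℝ) (hδ0' : 0 ≤ δ0') (hδ0'' : δ0' < δ0) :
    Tendsto (fun t : ℕ => ((t : ℝ) + 1) ^ δ0' * v t) atTop (nhds 0) := by
  obtain ⟨β, hδ0'β, hβδ0⟩ := exists_between hδ0''
  have hρδ0 : ρ =O[atTop] fun t : ℕ => ((t : ℝ) + 1) ^ (-(δ1 + δ0)) := by
    refine IsBigO.of_bound C (Eventually.of_forall fun t => ?_)
    rw [Real.norm_eq_abs, norm_of_nonneg (by positivity), rpow_neg (by positivity),
      ← div_eq_mul_inv]
    exact hρ t
  have hv : v =O[atTop] fun t : ℕ => ((t : ℝ) + 1) ^ (-β) :=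
    isBigO_rpow_neg_of_recurrence (mul_pos hc3 hc1) hδ1 hδ1' (hδ0'.trans_lt hδ0'β)
      (hρδ0.trans (isBigO_natCast_add_one_rpow_rpow (by linarith)))
      (Eventually.of_forall fun t => by rw [hrec t, mul_div_assoc])
  refine ((isBigO_refl _ _).mul hv).trans_tendsto ?_
  refine ((tendsto_rpow_neg_atTop (sub_pos.2 hδ0'β)).comp tendsto_natCast_add_one_atTop).congr
    fun t => ?_
  rw [Function.comp_apply, ← rpow_add (by positivity), neg_sub, sub_eq_add_neg]

theorem stmt_18 (c1 c3 C δ1 δ0 : ℝ)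
    (hc1 : 0 < c1) (hc3 : 0 < c3) (hC : 0 < C)
    (hδ1 : 0 < δ1) (hδ1' : δ1 < 1) (hδ0 : 0 < δ0)
    (v ρ : ℕ → ℝ)
    (hρ : ∀ t : ℕ, |ρ t| ≤ C / ((t : ℝ) + 1) ^ (δ1 + δ0))
    (hrec : ∀ t : ℕ, v (t + 1) = (1 - c3 * (c1 / ((t : ℝ) + 1) ^ δ1)) * v t + ρ t)
    (δ0' : ℝ) (hδ0' : 0 ≤ δ0') (hδ0'' : δ0' < δ0) :
    Tendsto (fun t : ℕ => ((t : ℝ) + 1) ^ δ0' * v t) atTop (nhds 0) :=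
  stmt_18_general c1 c3 C δ1 δ0 hc1 hc3 hδ1 hδ1' v ρ hρ hrec δ0' hδ0' hδ0''
end
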